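/- An operator in 𝒯(u) is of type α ∈ ℂ* (the Riemann sphere) if and only if its adjoint is of type conj(α)⁻¹, using the conventions 0⁻¹ = ∞ and ∞⁻¹ = 0 (and conj(∞) = ∞). -/

import Mathlib

/-! # Setting: truncated Toeplitz operators on model spaces

We work on the circle `𝕋`, realized as `AddCircle (2π)`, with its normalized Haar
(Lebesgue) measure `m`.  `L2` is the Lebesgue space `L²(𝕋, m)`, `H2 ⊆ L2` is the Hardy
space (the closed span of the nonnegative Fourier monomials), and for an inner function
`u` the model space is `Ku u = H² ⊖ uH²`, with orthogonal projection `Pu u : L² → Ku u`.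

For a symbol `Φ`, `IsTTO u Φ A` says that the bounded operator `A` on `Ku u` is the
truncated Toeplitz operator with symbol `Φ`, i.e. `A f = P_u (Φ f)` for every bounded
`f ∈ K_u`; thus `A ∈ 𝒯(u)` iff `∃ Φ ∈ L², IsTTO u Φ A`. -/

open MeasureTheory Complex
open scoped Real ENNReal ComplexConjugate

noncomputable section

namespace TTO

instance fact_two_pi_pos : Fact ((0:ℝ) < 2 * Real.pi) := ⟨by positivity⟩

/-- The circle, realized additively as `ℝ / 2πℤ`. -/
abbrev Circ : Type := AddCircle (2 * Real.pi)

/-- Normalized Lebesgue measure on the circle. -/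
abbrev m : Measure Circ := @AddCircle.haarAddCircle (2 * Real.pi) _

/-- The Lebesgue space `L²` of the circle. -/
abbrev L2 : Type := Lp ℂ 2 m

open scoped Classical in
/-- The element of `L²` determined by a function (junk value `0` if the function is
not square-integrable). -/
def toLp2 (f : Circ → ℂ) : L2 := if h : MemLp f 2 m then h.toLp f else 0

/-- The coordinate function `z` on the circle. -/
def coord : Circ → ℂ := fun w => fourier 1 w

/-- The Hardy space `H²`: the closed linear span in `L²` of the monomials `zⁿ`, `n ≥ 0`. -/
def H2 : Submodule ℂ L2 :=
  (Submodule.span ℂ (Set.range fun n : ℕ => (fourierLp 2 (n : ℤ) : L2))).topologicalClosure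

instance : CompleteSpace H2 :=
  (Submodule.isClosed_topologicalClosure _).completeSpace_coe

/-- The (closed) subspace `uH²` of `L²`. -/
def uH2 (u : Circ → ℂ) : Submodule ℂ L2 :=
  (Submodule.span ℂ {g : L2 | ∃ f : L2, f ∈ H2 ∧
    (g : Circ → ℂ) =ᵐ[m] fun w => u w * (f : Circ → ℂ) w}).topologicalClosure

/-- The model space `K_u = H² ⊖ uH²`. -/
def Ku (u : Circ → ℂ) : Submodule ℂ L2 := H2 ⊓ (uH2 u)ᗮ

instance completeSpace_Ku (u : Circ → ℂ) : CompleteSpace (Ku u) := by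
  have h : IsClosed ((Ku u : Set L2)) := by
    have h1 : IsClosed ((H2 : Set L2)) := Submodule.isClosed_topologicalClosure _
    have h2 : IsClosed (((uH2 u)ᗮ : Set L2)) := Submodule.isClosed_orthogonal _
    have h3 : (Ku u : Set L2) = (H2 : Set L2) ∩ ((uH2 u)ᗮ : Set L2) := by
      simp [Ku]
    rw [h3]; exact h1.inter h2
  exact h.completeSpace_coe

/-- The orthogonal projection `P_u : L² → K_u`. -/
def Pu (u : Circ → ℂ) : L2 →L[ℂ] Ku u := (Ku u).orthogonalProjectionOnto

/-- `u` is an inner function: (essentially bounded) measurable, of unit modulus a.e.,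
and belonging to `H²`. -/
def IsInner (u : Circ → ℂ) : Prop :=
  AEStronglyMeasurable u m ∧ (∀ᵐ w ∂m, ‖u w‖ = 1) ∧ toLp2 u ∈ H2

/-- `u` is nonconstant (as an element of `L²`). -/
def Nonconst (u : Circ → ℂ) : Prop := ¬ ∃ c : ℂ, u =ᵐ[m] fun _ => c

/-- `IsTTO u Φ A` : the bounded operator `A` on the model space `K_u` is the truncated
Toeplitz operator with symbol `Φ`, i.e. `A f = P_u (Φ · f)` for every bounded `f ∈ K_u`.
(`A ∈ 𝒯(u)` with symbol `Φ`.) -/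
def IsTTO (u Φ : Circ → ℂ) (A : Ku u →L[ℂ] Ku u) : Prop :=
  ∀ f : Ku u, MemLp ((f : L2) : Circ → ℂ) ⊤ m →
    A f = Pu u (toLp2 fun w => Φ w * ((f : L2) : Circ → ℂ) w)

/-- `A ∈ 𝒯(u)`: `A` is a (bounded) truncated Toeplitz operator, i.e. it has some
symbol in `L²`. -/
def MemTTOs (u : Circ → ℂ) (A : Ku u →L[ℂ] Ku u) : Prop :=
  ∃ Φ : Circ → ℂ, MemLp Φ 2 m ∧ IsTTO u Φ A

/-- Equality of the two (densely defined) truncated Toeplitz operators with symbols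
`Φ` and `Ψ`: they agree on all bounded elements of `K_u`. -/
def TTOeq (u Φ Ψ : Circ → ℂ) : Prop :=
  ∀ f : Ku u, MemLp ((f : L2) : Circ → ℂ) ⊤ m →
    Pu u (toLp2 fun w => Φ w * ((f : L2) : Circ → ℂ) w) =
      Pu u (toLp2 fun w => Ψ w * ((f : L2) : Circ → ℂ) w)

/-- Evaluation at the origin: for `f ∈ H²`, the value `f(0)` of the holomorphic
extension is `∫ f dm` (the zeroth Fourier coefficient). -/
def ev0 (f : Circ → ℂ) : ℂ := ∫ w, f w ∂m

/-- The reproducing kernel `K₀ = 1 − conj(u(0))·u` of `K_u` at `0`, as a function. -/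
def K0fun (u : Circ → ℂ) : Circ → ℂ := fun w => 1 - conj (ev0 u) * u w

/-- `K₀` as an element of `K_u`. -/
def K0 (u : Circ → ℂ) : Ku u := Pu u (toLp2 (K0fun u))

/-- The conjugate kernel `CK₀ = (u − u(0))/z`, as a function. -/
def CK0fun (u : Circ → ℂ) : Circ → ℂ := fun w => (u w - ev0 u) / coord w

/-- `CK₀` as an element of `K_u`. -/
def CK0 (u : Circ → ℂ) : Ku u := Pu u (toLp2 (CK0fun u))

/-- The conjugation `C f = u · conj(z f)`, as a map into `L²`. -/
def CfunL2 (u f : Circ → ℂ) : L2 := toLp2 fun w => u w * conj (coord w * f w)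

/-- The conjugation `C` on the model space `K_u`.  (Since `C` maps `K_u` onto itself,
post-composing with `P_u` realizes it as a map `K_u → K_u`.) -/
def Cop (u : Circ → ℂ) (f : Ku u) : Ku u := Pu u (CfunL2 u ((f : L2) : Circ → ℂ))

lemma smul_fun_eq_mul (g f : Circ → ℂ) : g • f = fun w => g w * f w := rfl

lemma memℒp_mul_of_top {g : Circ → ℂ} (hg : MemLp g ⊤ m) (f : L2) :
    MemLp (fun w => g w * (f : Circ → ℂ) w) 2 m := by
  have h : MemLp (g • ((f : L2) : Circ → ℂ)) 2 m := (Lp.memLp f).smul hg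
  rwa [smul_fun_eq_mul] at h

lemma memℒp_top_coord : MemLp coord ⊤ m := by
  refine memLp_top_of_bound ((map_continuous (fourier 1)).aestronglyMeasurable) 1 ?_
  exact Filter.Eventually.of_forall fun w => le_of_eq (Circle.norm_coe _)

/-- Multiplication by an essentially bounded function, as a bounded operator on `L²`. -/
def mulCLM (g : Circ → ℂ) (hg : MemLp g ⊤ m) : L2 →L[ℂ] L2 :=
  LinearMap.mkContinuous
    { toFun := fun f => (memℒp_mul_of_top hg f).toLp _
      map_add' := by
        intro f₁ f₂
        apply Lp.ext
        filter_upwards [MemLp.coeFn_toLp (memℒp_mul_of_top hg (f₁ + f₂)),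
          Lp.coeFn_add ((memℒp_mul_of_top hg f₁).toLp _) ((memℒp_mul_of_top hg f₂).toLp _),
          MemLp.coeFn_toLp (memℒp_mul_of_top hg f₁),
          MemLp.coeFn_toLp (memℒp_mul_of_top hg f₂),
          Lp.coeFn_add f₁ f₂] with w e0 e1 e2 e3 e4
        simp only [e0, e1, Pi.add_apply, e2, e3, e4, mul_add]
      map_smul' := by
        intro c f
        apply Lp.ext
        filter_upwards [MemLp.coeFn_toLp (memℒp_mul_of_top hg (c • f)),
          Lp.coeFn_smul c ((memℒp_mul_of_top hg f).toLp _),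
          MemLp.coeFn_toLp (memℒp_mul_of_top hg f),
          Lp.coeFn_smul c f] with w e0 e1 e2 e3
        simp only [e0, RingHom.id_apply, e1, Pi.smul_apply, e2, e3, smul_eq_mul]
        ring }
    (eLpNorm g ⊤ m).toReal
    (by
      intro f
      have hb : eLpNorm (fun w => g w * ((f : L2) : Circ → ℂ) w) 2 m ≤
          eLpNorm g ⊤ m * eLpNorm ((f : L2) : Circ → ℂ) 2 m := by
        have h := eLpNorm_smul_le_eLpNorm_top_mul_eLpNorm 2 (Lp.aestronglyMeasurable f) g
        rwa [smul_fun_eq_mul] at h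
      dsimp only [LinearMap.coe_mk, AddHom.coe_mk]
      rw [Lp.norm_toLp, Lp.norm_def, ← ENNReal.toReal_mul]
      exact ENNReal.toReal_mono
        (ENNReal.mul_ne_top hg.eLpNorm_ne_top (Lp.memLp f).eLpNorm_ne_top) hb)

/-- The compressed shift `S = A_z` on the model space `K_u`. -/
def Sop (u : Circ → ℂ) : Ku u →L[ℂ] Ku u :=
  (Pu u).comp ((mulCLM coord memℒp_top_coord).comp (Ku u).subtypeL)

/-- The rank one operator `f ⊗ g : h ↦ ⟨h, g⟩ f` (inner product linear in the first slot,
as in the paper). -/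
def rankOne {E : Type*} [NormedAddCommGroup E] [InnerProductSpace ℂ E] (f g : E) :
    E →L[ℂ] E :=
  (innerSL ℂ g).smulRight f

/-- The modified (generalized) shift
`S_α = S + (α/(1 − α·conj(u(0)))) K₀ ⊗ CK₀` on `K_u`. -/
def Salpha (u : Circ → ℂ) (α : ℂ) : Ku u →L[ℂ] Ku u :=
  Sop u + (α / (1 - α * conj (ev0 u))) • rankOne (K0 u) (CK0 u)

/-- The symbol `φ + α·conj(S(Cφ)) + c` associated with `φ ∈ K_u`, `α, c ∈ ℂ`. -/
def typeSymbol (u : Circ → ℂ) (α : ℂ) (φ : Ku u) (c : ℂ) : Circ → ℂ :=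
  fun w => ((φ : L2) : Circ → ℂ) w +
    α * conj (((Sop u (Cop u φ) : L2) : Circ → ℂ) w) + c

/-- `A ∈ 𝒯(u)` is of type `α ∈ ℂ`: it has a symbol of the form `φ + α·conj(S(Cφ)) + c`
with `φ ∈ K_u`, `c ∈ ℂ`. -/
def IsTypeC (u : Circ → ℂ) (α : ℂ) (A : Ku u →L[ℂ] Ku u) : Prop :=
  ∃ (φ : Ku u) (c : ℂ), IsTTO u (typeSymbol u α φ c) A

/-- `A ∈ 𝒯(u)` is of type `∞`: it has an antiholomorphic symbol `conj ψ`, `ψ ∈ H²`. -/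
def IsTypeInf (u : Circ → ℂ) (A : Ku u →L[ℂ] Ku u) : Prop :=
  ∃ ψ : Circ → ℂ, MemLp ψ 2 m ∧ toLp2 ψ ∈ H2 ∧ IsTTO u (fun w => conj (ψ w)) A

/-- Type over the Riemann sphere `ℂ* = ℂ ∪ {∞}`, encoded as `Option ℂ`
(`none` being the point at infinity). -/
def IsTypeS (u : Circ → ℂ) (A : Ku u →L[ℂ] Ku u) : Option ℂ → Prop
  | none => IsTypeInf u A
  | some α => IsTypeC u α A

/-- The self-map `α ↦ conj(α)⁻¹` of the Riemann sphere `ℂ* = ℂ ∪ {∞}` (encoded as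
`Option ℂ`, `none` being `∞`), with the conventions `0⁻¹ = ∞`, `∞⁻¹ = 0`,
`conj ∞ = ∞`. -/
def sphereInvConj : Option ℂ → Option ℂ
  | none => some 0
  | some α => if α = 0 then none else some (conj α)⁻¹

/-- The holomorphic (Cauchy) extension of a boundary function to the disc:
`f(z) = ∫ f(w)/(1 − z·conj w) dm(w)`; for `f ∈ H²` and `|z| < 1` this is the value at
`z` of the holomorphic extension of `f`. -/
def cauchyExt (f : Circ → ℂ) (z : ℂ) : ℂ := ∫ w, f w / (1 - z * conj (coord w)) ∂m

/-- A Stolz (nontangential approach) region at the boundary point `ζ` with aperture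
parameter `M`. -/
def stolz (ζ : ℂ) (M : ℝ) : Set ℂ := {z : ℂ | ‖z‖ < 1 ∧ ‖ζ - z‖ < M * (1 - ‖z‖)}

/-- `f` has nontangential limit `L` at the boundary point `ζ`. -/
def NTlim (f : ℂ → ℂ) (ζ L : ℂ) : Prop :=
  ∀ M : ℝ, 1 < M → Filter.Tendsto f (nhdsWithin ζ (stolz ζ M)) (nhds L)

/-- `u` has an angular derivative in the sense of Caratheodory at the boundary point
`ζ`, with nontangential limits `uζ` (of unit modulus) for `u` and `u'ζ` for `u′`. -/
def HasADC (u : Circ → ℂ) (ζ uζ u'ζ : ℂ) : Prop :=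
  ‖ζ‖ = 1 ∧ ‖uζ‖ = 1 ∧ NTlim (cauchyExt u) ζ uζ ∧ NTlim (deriv (cauchyExt u)) ζ u'ζ

end TTO

/-!
Taking adjoints conjugates symbols, `A_Φ* = A_{conj Φ}`. Both sides are only defined through
bounded functions of `K_u`, which are dense: `P_u zⁿ = zⁿ − u p` with `p` a polynomial. The
theorem is then symbol calculus modulo the null symbols `u H²` and `ℂ · conj u`.

* Types `∞ ↔ 0`: an `H²` symbol `ψ` splits as `φ + u h` with `φ ∈ K_u`, `h ∈ H²`; conversely
  `conj (φ + c)` is antiholomorphic.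
* Type `α ≠ 0`: writing `d = conj φ(0)`, one has `S C φ = u (conj φ − d)`. For
  `φ' = conj α · S C φ`, unimodularity of `u` gives
  `conj (φ + α conj (S C φ) + c) = φ' + (conj α)⁻¹ conj (S C φ') + (conj c + d) + μ conj u`
  for a constant `μ`.

As `x ↦ conj(x)⁻¹` is an involution of the sphere and `A** = A`, one direction suffices.
-/

lemma MeasureTheory.MemLp.conj {α : Type*} [MeasurableSpace α] {μ : Measure α} {p : ℝ≥0∞}
    {f : α → ℂ} (hf : MemLp f p μ) : MemLp (fun w => conj (f w)) p μ :=
  hf.star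

namespace TTO

open scoped InnerProductSpace

variable {u : Circ → ℂ}

section toLp2

variable {f g : Circ → ℂ}

lemma coeFn_toLp2 (hf : MemLp f 2 m) : (toLp2 f : Circ → ℂ) =ᵐ[m] f := by
  rw [toLp2, dif_pos hf]
  exact hf.coeFn_toLp

lemma toLp2_congr_ae (h : f =ᵐ[m] g) : toLp2 f = toLp2 g := by
  by_cases hf : MemLp f 2 m
  · rw [toLp2, toLp2, dif_pos hf, dif_pos (hf.ae_eq h)]
    exact hf.toLp_congr _ h
  · rw [toLp2, toLp2, dif_neg hf, dif_neg fun hg => hf (hg.ae_eq h.symm)]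

lemma toLp2_coe (F : L2) : toLp2 F = F := by
  rw [toLp2, dif_pos (Lp.memLp F), Lp.toLp_coeFn]

lemma toLp2_add (hf : MemLp f 2 m) (hg : MemLp g 2 m) :
    toLp2 (fun w => f w + g w) = toLp2 f + toLp2 g := by
  have hfg : MemLp (fun w => f w + g w) 2 m := hf.add hg
  rw [toLp2, toLp2, toLp2, dif_pos hf, dif_pos hg, dif_pos hfg]
  rfl

lemma toLp2_const_mul (c : ℂ) (hf : MemLp f 2 m) :
    toLp2 (fun w => c * f w) = c • toLp2 f := by
  have hcf : MemLp (fun w => c * f w) 2 m := hf.const_smul c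
  rw [toLp2, toLp2, dif_pos hf, dif_pos hcf]
  rfl

end toLp2

lemma inner_eq_integral (F G : L2) : ⟪F, G⟫_ℂ = ∫ w, conj (F w) * G w ∂m := by
  rw [L2.inner_def]
  exact integral_congr_ae (.of_forall fun w => by simp [mul_comm])

lemma memLp_top_of_norm_eq_one {g : Circ → ℂ} (hg : AEStronglyMeasurable g m)
    (h : ∀ᵐ w ∂m, ‖g w‖ = 1) : MemLp g ⊤ m :=
  memLp_top_of_bound hg 1 (h.mono fun _ hw => hw.le)

lemma IsInner.memLp_top (hu : IsInner u) : MemLp u ⊤ m :=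
  memLp_top_of_norm_eq_one hu.1 hu.2.1

lemma IsInner.conj_mul_self (hu : IsInner u) : ∀ᵐ w ∂m, conj (u w) * u w = 1 := by
  filter_upwards [hu.2.1] with w hw
  rw [Complex.conj_mul', hw]
  norm_num

abbrev fourierL2 (n : ℤ) : L2 := fourierLp 2 n

lemma inner_fourierL2 (n : ℤ) (F : L2) : ⟪fourierL2 n, F⟫_ℂ = fourierCoeff F n := by
  rw [← fourierBasis_repr, fourierBasis.repr_apply_apply, coe_fourierBasis]

lemma inner_fourierL2_fourierL2 (j n : ℤ) :
    ⟪fourierL2 j, fourierL2 n⟫_ℂ = if j = n then 1 else 0 :=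
  orthonormal_iff_ite.mp orthonormal_fourier j n

lemma toLp2_const (c : ℂ) : toLp2 (fun _ => c) = c • fourierL2 0 := by
  rw [← toLp2_coe (fourierL2 0), ← toLp2_const_mul _ (Lp.memLp _)]
  refine toLp2_congr_ae ?_
  filter_upwards [coeFn_fourierLp 2 0] with w hw
  rw [hw, fourier_zero, mul_one]

lemma eq_zero_of_fourierCoeff_eq_zero {F : L2} (h : ∀ n, fourierCoeff F n = 0) : F = 0 := by
  have : fourierBasis.repr F = 0 := by
    ext n
    simp [fourierBasis_repr, h]
  simpa using this

lemma fourierCoeff_toLp2 {f : Circ → ℂ} (hf : MemLp f 2 m) :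
    fourierCoeff (toLp2 f) = fourierCoeff f :=
  fourierCoeff_congr_ae (coeFn_toLp2 hf)

lemma inner_eq_zero_of_mem_closure_span {E : Type*} [NormedAddCommGroup E]
    [InnerProductSpace ℂ E] {S : Set E} {x y : E} (h : ∀ s ∈ S, ⟪s, x⟫_ℂ = 0)
    (hy : y ∈ (Submodule.span ℂ S).topologicalClosure) : ⟪y, x⟫_ℂ = 0 := by
  have hS : Submodule.span ℂ S ≤ (ℂ ∙ x)ᗮ := Submodule.span_le.mpr fun s hs =>
    Submodule.mem_orthogonal_singleton_iff_inner_left.mpr (h s hs)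
  exact Submodule.mem_orthogonal_singleton_iff_inner_left.mp
    (Submodule.topologicalClosure_minimal _ hS (Submodule.isClosed_orthogonal _) hy)

lemma isClosed_H2 : IsClosed (H2 : Set L2) := Submodule.isClosed_topologicalClosure _

lemma fourierL2_mem_H2 (n : ℕ) : fourierL2 n ∈ H2 :=
  Submodule.le_topologicalClosure _ (Submodule.subset_span ⟨n, rfl⟩)

lemma mem_H2_iff {F : L2} : F ∈ H2 ↔ ∀ n < 0, fourierCoeff F n = 0 := by
  refine ⟨fun hF n hn => ?_, fun h => ?_⟩
  · rw [← inner_fourierL2, ← inner_conj_symm, inner_eq_zero_of_mem_closure_span _ hF, map_zero]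
    rintro _ ⟨k, rfl⟩
    rw [inner_fourierL2_fourierL2, if_neg (by omega)]
  · refine isClosed_H2.mem_of_tendsto (fourierBasis.hasSum_repr F)
      (.of_forall fun s => Submodule.sum_mem _ fun i _ => ?_)
    rcases lt_or_ge i 0 with hi | hi
    · rw [fourierBasis_repr, h i hi, zero_smul]
      exact zero_mem _
    · lift i to ℕ using hi
      rw [coe_fourierBasis]
      exact Submodule.smul_mem _ _ (fourierL2_mem_H2 i)

section mulCLM

variable {g : Circ → ℂ} (hg : MemLp g ⊤ m)

lemma coeFn_mulCLM (F : L2) : (mulCLM g hg F : Circ → ℂ) =ᵐ[m] fun w => g w * F w :=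
  (memℒp_mul_of_top hg F).coeFn_toLp

lemma fourierCoeff_mulCLM_fourierL2 (k n : ℤ) :
    fourierCoeff (mulCLM g hg (fourierL2 k)) n = fourierCoeff g (n - k) := by
  rw [fourierCoeff_congr_ae (coeFn_mulCLM hg _)]
  refine integral_congr_ae ?_
  filter_upwards [coeFn_fourierLp 2 k] with w hw
  rw [hw, smul_eq_mul, smul_eq_mul, neg_sub, sub_eq_add_neg, fourier_add]
  ring

lemma mulCLM_mem_H2 (hgH2 : toLp2 g ∈ H2) {F : L2} (hF : F ∈ H2) : mulCLM g hg F ∈ H2 := by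
  have hgen : Submodule.span ℂ (Set.range fun n : ℕ => fourierL2 n) ≤
      H2.comap (mulCLM g hg : L2 →ₗ[ℂ] L2) := by
    refine Submodule.span_le.mpr ?_
    rintro _ ⟨k, rfl⟩
    refine mem_H2_iff.mpr fun n hn => ?_
    change fourierCoeff (mulCLM g hg (fourierL2 k)) n = 0
    rw [fourierCoeff_mulCLM_fourierL2,
      ← fourierCoeff_toLp2 ((hg.mono_exponent le_top : MemLp g 2 m))]
    exact mem_H2_iff.mp hgH2 _ (by omega)
  exact Submodule.topologicalClosure_minimal _ hgen
    (isClosed_H2.preimage (mulCLM g hg).continuous) hF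

lemma inner_mulCLM_mulCLM (h1 : ∀ᵐ w ∂m, conj (g w) * g w = 1) (F G : L2) :
    ⟪mulCLM g hg F, mulCLM g hg G⟫_ℂ = ⟪F, G⟫_ℂ := by
  rw [inner_eq_integral, inner_eq_integral]
  refine integral_congr_ae ?_
  filter_upwards [coeFn_mulCLM hg F, coeFn_mulCLM hg G, h1] with w hF hG hw
  rw [hF, hG, map_mul]
  linear_combination (conj (F w) * G w) * hw

end mulCLM

lemma mulCLM_mem_uH2 (hu : IsInner u) {F : L2} (hF : F ∈ H2) :
    mulCLM u hu.memLp_top F ∈ uH2 u :=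
  Submodule.le_topologicalClosure _ (Submodule.subset_span ⟨F, hF, coeFn_mulCLM _ F⟩)

lemma mem_uH2_orthogonal_iff (hu : IsInner u) {x : L2} :
    x ∈ (uH2 u)ᗮ ↔ ∀ k : ℕ, ⟪mulCLM u hu.memLp_top (fourierL2 k), x⟫_ℂ = 0 := by
  set U := mulCLM u hu.memLp_top
  refine ⟨fun hx k => Submodule.inner_right_of_mem_orthogonal
    (mulCLM_mem_uH2 hu (fourierL2_mem_H2 k)) hx, fun h => ?_⟩
  have hH2 : ∀ F ∈ H2, ⟪U F, x⟫_ℂ = 0 := fun F hF => by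
    rw [← ContinuousLinearMap.adjoint_inner_right]
    refine inner_eq_zero_of_mem_closure_span ?_ hF
    rintro _ ⟨k, rfl⟩
    rw [ContinuousLinearMap.adjoint_inner_right]
    exact h k
  refine (Submodule.mem_orthogonal _ _).mpr fun q hq => inner_eq_zero_of_mem_closure_span ?_ hq
  rintro s ⟨F, hF, hs⟩
  rw [show s = U F from Lp.ext (hs.trans (coeFn_mulCLM _ F).symm)]
  exact hH2 F hF

lemma coe_Pu_of_mem {v : L2} (hv : v ∈ Ku u) : (Pu u v : L2) = v :=
  congrArg Subtype.val (Submodule.orthogonalProjectionOnto_mem_subspace_eq_self ⟨v, hv⟩)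

lemma Pu_eq_zero_of_mem_uH2 {v : L2} (hv : v ∈ uH2 u) : Pu u v = 0 :=
  Submodule.orthogonalProjectionOnto_eq_zero_iff.mpr <| (Submodule.mem_orthogonal _ _).mpr
    fun _ hy => Submodule.inner_left_of_mem_orthogonal hv hy.2

def boundedL2 : Submodule ℂ L2 where
  carrier := {F | MemLp (F : Circ → ℂ) ⊤ m}
  add_mem' {F G} hF hG := (hF.add hG).ae_eq (Lp.coeFn_add F G).symm
  zero_mem' := (memLp_const (0 : ℂ)).ae_eq (Lp.coeFn_zero ℂ ⊤ m).symm
  smul_mem' c F hF := (hF.const_smul c).ae_eq (Lp.coeFn_smul c F).symm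

lemma fourierL2_mem_boundedL2 (n : ℤ) : fourierL2 n ∈ boundedL2 :=
  (memLp_top_of_norm_eq_one (fourier n).continuous.aestronglyMeasurable
    (.of_forall fun w => by simpa [fourier_apply] using Circle.norm_coe _)).ae_eq
    (coeFn_fourierLp 2 n).symm

lemma mulCLM_mem_boundedL2 {g : Circ → ℂ} (hg : MemLp g ⊤ m) {F : L2} (hF : F ∈ boundedL2) :
    mulCLM g hg F ∈ boundedL2 :=
  (MemLp.mul' (p := ⊤) (q := ⊤) hF hg).ae_eq (coeFn_mulCLM hg F).symm

/-- `zⁿ − u·p` with `p` the part of degree `≤ n` of `conj(u)·zⁿ` is `P_u zⁿ`; it is bounded. -/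
lemma exists_bounded_mem_Ku_inner_eq_fourierCoeff (hu : IsInner u) (n : ℕ) :
    ∃ g ∈ Ku u, g ∈ boundedL2 ∧ ∀ X ∈ Ku u, ⟪g, X⟫_ℂ = fourierCoeff X n := by
  set U := mulCLM u hu.memLp_top
  set c : ℕ → ℂ := fun k => ⟪U (fourierL2 k), fourierL2 n⟫_ℂ
  set p : L2 := ∑ k ∈ Finset.range (n + 1), c k • fourierL2 k
  have hp : p ∈ H2 := Submodule.sum_mem _ fun k _ => Submodule.smul_mem _ _ (fourierL2_mem_H2 k)
  have hUp : U p ∈ uH2 u := mulCLM_mem_uH2 hu hp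
  have hinner_p (j : ℕ) : ⟪fourierL2 j, p⟫_ℂ = if j ≤ n then c j else 0 := by
    simp only [p, inner_sum, inner_smul_right, inner_fourierL2_fourierL2, Nat.cast_inj,
      mul_ite, mul_one, mul_zero, Finset.sum_ite_eq, Finset.mem_range, Nat.lt_succ_iff]
  refine ⟨fourierL2 n - U p, ⟨Submodule.sub_mem _ (fourierL2_mem_H2 n)
    (mulCLM_mem_H2 _ hu.2.2 hp), (mem_uH2_orthogonal_iff hu).mpr fun j => ?_⟩,
    Submodule.sub_mem _ (fourierL2_mem_boundedL2 n) (mulCLM_mem_boundedL2 _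
      (Submodule.sum_mem _ fun k _ => Submodule.smul_mem _ _ (fourierL2_mem_boundedL2 k))),
    fun X hX => ?_⟩
  · rw [inner_sub_right, inner_mulCLM_mulCLM _ hu.conj_mul_self, hinner_p]
    split_ifs with hj
    · exact sub_self _
    · rw [sub_zero, ← inner_conj_symm, inner_fourierL2, fourierCoeff_mulCLM_fourierL2,
        ← fourierCoeff_toLp2 (hu.memLp_top.mono_exponent le_top),
        mem_H2_iff.mp hu.2.2 _ (by omega), map_zero]
  · rw [inner_sub_left, inner_fourierL2, Submodule.inner_right_of_mem_orthogonal hUp hX.2,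
      sub_zero]

lemma eq_zero_of_inner_bounded_eq_zero (hu : IsInner u) {X : L2} (hX : X ∈ Ku u)
    (h : ∀ g : Ku u, MemLp ((g : L2) : Circ → ℂ) ⊤ m → ⟪(g : L2), X⟫_ℂ = 0) : X = 0 := by
  refine eq_zero_of_fourierCoeff_eq_zero fun n => ?_
  rcases lt_or_ge n 0 with hn | hn
  · exact mem_H2_iff.mp hX.1 n hn
  · lift n to ℕ using hn
    obtain ⟨g, hgK, hgb, hg⟩ := exists_bounded_mem_Ku_inner_eq_fourierCoeff hu n
    rw [← hg X hX]
    exact h ⟨g, hgK⟩ hgb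

lemma inner_Pu_left (v : L2) (g : Ku u) : ⟪Pu u v, g⟫_ℂ = ⟪v, (g : L2)⟫_ℂ :=
  Submodule.inner_orthogonalProjectionOnto_eq_of_mem_right g v

lemma inner_Pu_right (g : Ku u) (v : L2) : ⟪g, Pu u v⟫_ℂ = ⟪(g : L2), v⟫_ℂ :=
  Submodule.inner_orthogonalProjectionOnto_eq_of_mem_left g v

lemma IsTTO.congr_ae {Φ Ψ : Circ → ℂ} {A : Ku u →L[ℂ] Ku u} (hA : IsTTO u Φ A)
    (h : Φ =ᵐ[m] Ψ) : IsTTO u Ψ A := fun f hf => by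
  rw [hA f hf, toLp2_congr_ae (h.mono fun w hw => by rw [hw])]

lemma IsTTO.add {Φ Ψ : Circ → ℂ} {A B : Ku u →L[ℂ] Ku u} (hΦ : MemLp Φ 2 m)
    (hΨ : MemLp Ψ 2 m) (hA : IsTTO u Φ A) (hB : IsTTO u Ψ B) :
    IsTTO u (fun w => Φ w + Ψ w) (A + B) := fun f hf => by
  rw [add_apply, hA f hf, hB f hf, ← map_add,
    ← toLp2_add (hf.mul' hΦ) (hf.mul' hΨ)]
  simp only [add_mul]

lemma IsTTO.adjoint (hu : IsInner u) {Φ : Circ → ℂ} (hΦ : MemLp Φ 2 m)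
    {A : Ku u →L[ℂ] Ku u} (hA : IsTTO u Φ A) :
    IsTTO u (fun w => conj (Φ w)) (ContinuousLinearMap.adjoint A) := fun f hf => by
  refine sub_eq_zero.mp (Subtype.ext (eq_zero_of_inner_bounded_eq_zero hu (Submodule.coe_mem _)
    fun g hg => ?_))
  rw [← Submodule.coe_inner, inner_sub_right, ContinuousLinearMap.adjoint_inner_right, hA g hg,
    inner_Pu_left, inner_Pu_right, inner_eq_integral, inner_eq_integral, sub_eq_zero]
  refine integral_congr_ae ?_
  filter_upwards [coeFn_toLp2 (hg.mul' hΦ), coeFn_toLp2 (hf.mul' hΦ.conj)] with w h1 h2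
  rw [h1, h2, map_mul]
  ring

lemma mem_uH2_of_ae {q F : L2} (hF : F ∈ H2) (h : (q : Circ → ℂ) =ᵐ[m] fun w => u w * F w) :
    q ∈ uH2 u :=
  Submodule.le_topologicalClosure _ (Submodule.subset_span ⟨F, hF, h⟩)

lemma isTTO_mul_zero (hu : IsInner u) {h : Circ → ℂ} (hh : MemLp h 2 m) (hH2 : toLp2 h ∈ H2) :
    IsTTO u (fun w => u w * h w) 0 := fun f hf => by
  have hfH2 : toLp2 (f : Circ → ℂ) ∈ H2 := by
    rw [toLp2_coe]
    exact f.2.1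
  refine (Pu_eq_zero_of_mem_uH2 (mem_uH2_of_ae (mulCLM_mem_H2 hf hfH2 hH2) ?_)).symm
  have huh : MemLp (fun w => u w * h w) 2 m := hh.mul' hu.memLp_top
  filter_upwards [coeFn_toLp2 (hf.mul' huh), coeFn_mulCLM hf (toLp2 h),
    coeFn_toLp2 hh] with w h1 h2 h3
  rw [h1, h2, h3]
  ring

lemma isTTO_const_mul_conj_zero (hu : IsInner u) (μ : ℂ) :
    IsTTO u (fun w => μ * conj (u w)) 0 := by
  have hconst : MemLp (fun _ : Circ => conj μ) 2 m := memLp_const _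
  have h0 := (isTTO_mul_zero hu hconst ?_).adjoint hu (hconst.mul' hu.memLp_top)
  · rw [LinearIsometryEquiv.map_zero] at h0
    exact h0.congr_ae (.of_forall fun w => by simp [mul_comm])
  · rw [toLp2_const]
    exact Submodule.smul_mem _ _ (fourierL2_mem_H2 0)

lemma conj_coord_mul_coord (w : Circ) : conj (coord w) * coord w = 1 := by
  rw [Complex.conj_mul', show ‖coord w‖ = 1 by simpa [coord, fourier_apply] using Circle.norm_coe _]
  norm_num

lemma coe_Pu_eq_of_sub_mem_uH2 {v w : L2} (hw : w ∈ Ku u) (hvw : v - w ∈ uH2 u) :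
    (Pu u v : L2) = w := by
  rw [← sub_add_cancel v w, map_add, Pu_eq_zero_of_mem_uH2 hvw, zero_add, coe_Pu_of_mem hw]

section conjugation

variable (hu : IsInner u) (ψ : L2)

lemma fourierCoeff_mul_conj (n : ℤ) : fourierCoeff (fun w => u w * conj (ψ w)) n =
    conj ⟪mulCLM u hu.memLp_top (fourierL2 (-n)), ψ⟫_ℂ := by
  rw [inner_eq_integral, ← integral_conj]
  refine integral_congr_ae ?_
  filter_upwards [coeFn_mulCLM hu.memLp_top (fourierL2 (-n)), coeFn_fourierLp 2 (-n)]
    with w h1 h2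
  rw [h1, h2, smul_eq_mul]
  simp only [map_mul, RCLike.conj_conj]
  ring

lemma inner_mulCLM_fourierL2_mul_conj (k : ℤ) :
    ⟪mulCLM u hu.memLp_top (fourierL2 k), toLp2 fun w => u w * conj (ψ w)⟫_ℂ =
      conj (fourierCoeff ψ (-k)) := by
  rw [inner_eq_integral, fourierCoeff, ← integral_conj]
  refine integral_congr_ae ?_
  filter_upwards [coeFn_mulCLM hu.memLp_top (fourierL2 k), coeFn_fourierLp 2 k,
    coeFn_toLp2 ((Lp.memLp ψ).conj.mul' hu.memLp_top), hu.conj_mul_self] with w h1 h2 h3 h4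
  rw [h1, h2, h3, neg_neg, smul_eq_mul]
  simp only [map_mul]
  linear_combination (conj (fourier k w) * conj (ψ w)) * h4

/-- The hypotheses say that `ψ ∈ z K_u`. -/
lemma toLp2_mul_conj_mem_Ku (hψ : ∀ n ≤ 0, fourierCoeff ψ n = 0)
    (hψu : ∀ k : ℕ, ⟪mulCLM u hu.memLp_top (fourierL2 (k + 1)), ψ⟫_ℂ = 0) :
    toLp2 (fun w => u w * conj (ψ w)) ∈ Ku u := by
  refine ⟨mem_H2_iff.mpr fun n hn => ?_, (mem_uH2_orthogonal_iff hu).mpr fun k => ?_⟩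
  · obtain ⟨k, hk⟩ : ∃ k : ℕ, -n = k + 1 := ⟨(-n - 1).toNat, by omega⟩
    rw [fourierCoeff_toLp2 ((Lp.memLp ψ).conj.mul' hu.memLp_top), fourierCoeff_mul_conj hu, hk,
      hψu, map_zero]
  · rw [inner_mulCLM_fourierL2_mul_conj hu, hψ _ (by omega), map_zero]

end conjugation

lemma fourierCoeff_mulCLM_coord (F : L2) (n : ℤ) :
    fourierCoeff (mulCLM coord memℒp_top_coord F) n = fourierCoeff F (n - 1) := by
  rw [fourierCoeff_congr_ae (coeFn_mulCLM _ F)]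
  refine integral_congr_ae (.of_forall fun w => ?_)
  simp only [smul_eq_mul, coord, show -(n - 1) = -n + 1 by ring, fourier_add]
  ring

lemma coe_Cop (hu : IsInner u) (φ : Ku u) :
    (Cop u φ : L2) = toLp2 fun w => u w * conj (coord w * (φ : L2) w) := by
  set Z := mulCLM coord memℒp_top_coord
  have hZ : (toLp2 fun w => u w * conj (coord w * (φ : L2) w)) =
      toLp2 fun w => u w * conj (Z φ w) :=
    toLp2_congr_ae <| (coeFn_mulCLM memℒp_top_coord (φ : L2)).mono fun w hw => by
      simp only [Z, hw]
  rw [Cop, CfunL2, hZ]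
  refine coe_Pu_of_mem (toLp2_mul_conj_mem_Ku hu _ (fun n hn => ?_) fun k => ?_)
  · rw [fourierCoeff_mulCLM_coord]
    exact mem_H2_iff.mp φ.2.1 _ (by omega)
  · rw [← φ.2.2 _ (mulCLM_mem_uH2 hu (fourierL2_mem_H2 k)), inner_eq_integral, inner_eq_integral]
    refine integral_congr_ae ?_
    filter_upwards [coeFn_mulCLM hu.memLp_top (fourierL2 (k + 1)),
      coeFn_mulCLM hu.memLp_top (fourierL2 k), coeFn_mulCLM memℒp_top_coord (φ : L2),
      coeFn_fourierLp 2 (k + 1), coeFn_fourierLp 2 k] with w h1 h2 h3 h4 h5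
    rw [h1, h2, h3, h4, h5, fourier_add, show fourier 1 w = coord w from rfl]
    simp only [map_mul]
    linear_combination (conj (u w) * conj (fourier k w) * (φ : L2) w) * conj_coord_mul_coord w

lemma coeFn_Sop_Cop (hu : IsInner u) (φ : Ku u) :
    (Sop u (Cop u φ) : Circ → ℂ) =ᵐ[m]
      fun w => u w * (conj ((φ : L2) w) - conj (fourierCoeff (φ : L2) 0)) := by
  set a := fourierCoeff ((φ : L2) : Circ → ℂ) 0
  set ψ : L2 := (φ : L2) - a • fourierL2 0
  have hψ : (ψ : Circ → ℂ) =ᵐ[m] fun w => (φ : L2) w - a := by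
    filter_upwards [Lp.coeFn_sub (φ : L2) (a • fourierL2 0), Lp.coeFn_smul a (fourierL2 0),
      coeFn_fourierLp 2 0] with w h1 h2 h3
    rw [h1, Pi.sub_apply, h2, Pi.smul_apply, h3, fourier_zero, smul_eq_mul, mul_one]
  have hcoef (n : ℤ) : fourierCoeff ψ n = fourierCoeff (φ : L2) n - a * if n = 0 then 1 else 0 := by
    rw [← inner_fourierL2, inner_sub_right, inner_smul_right, inner_fourierL2,
      inner_fourierL2_fourierL2]
  have hW : toLp2 (fun w => u w * conj (ψ w)) ∈ Ku u := by
    refine toLp2_mul_conj_mem_Ku hu ψ (fun n hn => ?_) fun k => ?_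
    · rcases hn.lt_or_eq with hn | rfl
      · rw [hcoef, mem_H2_iff.mp φ.2.1 n hn, if_neg hn.ne, mul_zero, sub_zero]
      · rw [hcoef, if_pos rfl, mul_one, sub_self]
    · rw [inner_sub_right, inner_smul_right,
        φ.2.2 _ (mulCLM_mem_uH2 hu (by exact_mod_cast fourierL2_mem_H2 (k + 1))),
        ← inner_conj_symm, inner_fourierL2, fourierCoeff_mulCLM_fourierL2,
        ← fourierCoeff_toLp2 (hu.memLp_top.mono_exponent le_top),
        mem_H2_iff.mp hu.2.2 _ (by omega), map_zero, mul_zero, sub_zero]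
  have hmem : MemLp (fun w => u w * conj (ψ w)) 2 m := (Lp.memLp ψ).conj.mul' hu.memLp_top
  have hCφ : MemLp (fun w => u w * conj (coord w * (φ : L2) w)) 2 m :=
    (MemLp.mul' (r := 2) (Lp.memLp (φ : L2)) memℒp_top_coord).conj.mul' hu.memLp_top
  have hS : (Sop u (Cop u φ) : L2) = toLp2 fun w => u w * conj (ψ w) := by
    change (Pu u (mulCLM coord memℒp_top_coord (Cop u φ : L2)) : L2) = _
    refine coe_Pu_eq_of_sub_mem_uH2 hW (mem_uH2_of_ae (F := conj a • fourierL2 0)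
      (Submodule.smul_mem _ _ (fourierL2_mem_H2 0)) ?_)
    filter_upwards [Lp.coeFn_sub (mulCLM coord memℒp_top_coord (Cop u φ : L2))
        (toLp2 fun w => u w * conj (ψ w)),
      coeFn_mulCLM memℒp_top_coord (Cop u φ : L2), coe_Cop hu φ ▸ coeFn_toLp2 hCφ,
      coeFn_toLp2 hmem, hψ, Lp.coeFn_smul (conj a) (fourierL2 0), coeFn_fourierLp 2 0]
      with w h1 h2 h3 h4 h5 h6 h7
    rw [h1, Pi.sub_apply, h2, h3, h4, h5, h6, Pi.smul_apply, h7, fourier_zero, smul_eq_mul]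
    simp only [map_mul, map_sub]
    linear_combination (u w * conj ((φ : L2) w)) * conj_coord_mul_coord w
  rw [hS]
  filter_upwards [coeFn_toLp2 hmem, hψ] with w h1 h2
  rw [h1, h2, map_sub]

lemma memLp_typeSymbol (α : ℂ) (φ : Ku u) (c : ℂ) : MemLp (typeSymbol u α φ c) 2 m := by
  have h : MemLp (fun w => α * conj ((Sop u (Cop u φ) : L2) w)) 2 m :=
    (Lp.memLp _).conj.const_mul α
  exact ((Lp.memLp (φ : L2)).add h).add (memLp_const c)

lemma IsTypeInf.adjoint (hu : IsInner u) {A : Ku u →L[ℂ] Ku u} (hA : IsTypeInf u A) :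
    IsTypeC u 0 (ContinuousLinearMap.adjoint A) := by
  obtain ⟨ψ, hψ, hψH2, hA⟩ := hA
  set U := mulCLM u hu.memLp_top
  -- `ψ = φ + u h` with `φ ∈ K_u` and `h = P_{H²}(conj u · ψ)`
  set h : H2 := H2.orthogonalProjectionOnto (ContinuousLinearMap.adjoint U (toLp2 ψ))
  have hφ : toLp2 ψ - U h ∈ Ku u := by
    refine ⟨Submodule.sub_mem _ hψH2 (mulCLM_mem_H2 _ hu.2.2 h.2),
      (mem_uH2_orthogonal_iff hu).mpr fun k => ?_⟩
    rw [inner_sub_right, inner_mulCLM_mulCLM _ hu.conj_mul_self, ← ContinuousLinearMap.adjoint_inner_right,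
      sub_eq_zero]
    exact (Submodule.inner_orthogonalProjectionOnto_eq_of_mem_left
      (⟨fourierL2 k, fourierL2_mem_H2 k⟩ : H2) _).symm
  have hnull := isTTO_mul_zero hu (Lp.memLp (-(h : L2))) (by
    rw [toLp2_coe]
    exact neg_mem h.2)
  have hsum := (hA.adjoint hu hψ.conj).add hψ.conj.conj ((Lp.memLp _).mul' hu.memLp_top) hnull
  rw [add_zero] at hsum
  refine ⟨⟨_, hφ⟩, 0, hsum.congr_ae ?_⟩
  filter_upwards [Lp.coeFn_sub (toLp2 ψ) (U h), coeFn_toLp2 hψ, coeFn_mulCLM hu.memLp_top (h : L2),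
    Lp.coeFn_neg (h : L2)] with w h1 h2 h3 h4
  simp only [typeSymbol, U, h1, Pi.sub_apply, h2, h3, h4, Pi.neg_apply, RCLike.conj_conj]
  ring

lemma IsTypeC.adjoint_of_eq_zero (hu : IsInner u) {A : Ku u →L[ℂ] Ku u} (hA : IsTypeC u 0 A) :
    IsTypeInf u (ContinuousLinearMap.adjoint A) := by
  obtain ⟨φ, c, hA⟩ := hA
  have hφ : MemLp ((φ : L2) : Circ → ℂ) 2 m := Lp.memLp _
  refine ⟨fun w => (φ : L2) w + c, hφ.add (memLp_const c), ?_,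
    (hA.adjoint hu (memLp_typeSymbol 0 φ c)).congr_ae
      (.of_forall fun w => by simp only [typeSymbol, zero_mul, add_zero])⟩
  rw [toLp2_add hφ (memLp_const c), toLp2_coe, toLp2_const]
  exact add_mem φ.2.1 (Submodule.smul_mem _ _ (fourierL2_mem_H2 0))

lemma IsTypeC.adjoint_of_ne_zero (hu : IsInner u) {A : Ku u →L[ℂ] Ku u} {α : ℂ} (hα : α ≠ 0)
    (hA : IsTypeC u α A) : IsTypeC u (conj α)⁻¹ (ContinuousLinearMap.adjoint A) := by
  obtain ⟨φ, c, hA⟩ := hA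
  set φ' : Ku u := conj α • Sop u (Cop u φ)
  set a := fourierCoeff ((φ : L2) : Circ → ℂ) 0
  set b := fourierCoeff ((φ' : L2) : Circ → ℂ) 0
  have hφ' : ((φ' : L2) : Circ → ℂ) =ᵐ[m]
      fun w => conj α * (u w * (conj ((φ : L2) w) - conj a)) := by
    filter_upwards [Lp.coeFn_smul (conj α) (Sop u (Cop u φ) : L2), coeFn_Sop_Cop hu φ] with w h1 h2
    rw [Submodule.coe_smul, h1, Pi.smul_apply, h2, smul_eq_mul]
  have hsum := (hA.adjoint hu (memLp_typeSymbol α φ c)).add (memLp_typeSymbol α φ c).conj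
    ((hu.memLp_top.conj.mono_exponent le_top).const_mul _)
    (isTTO_const_mul_conj_zero hu (-((conj α)⁻¹ * b)))
  rw [add_zero] at hsum
  refine ⟨φ', conj c + conj a, hsum.congr_ae ?_⟩
  have hβ : (conj α)⁻¹ * conj α = 1 := inv_mul_cancel₀ ((map_ne_zero _).mpr hα)
  filter_upwards [hφ', coeFn_Sop_Cop hu φ', coeFn_Sop_Cop hu φ, hu.conj_mul_self]
    with w h1 h2 h3 h4
  simp only [typeSymbol, h1, h2, h3, map_add, map_mul, map_sub, RCLike.conj_conj]
  linear_combination (-(conj ((φ : L2) w) - conj a)) * hβ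
    - (conj ((φ : L2) w) - conj a) * (conj α)⁻¹ * conj α * h4

lemma IsTypeS.adjoint (hu : IsInner u) {A : Ku u →L[ℂ] Ku u} :
    ∀ {x : Option ℂ}, IsTypeS u A x →
      IsTypeS u (ContinuousLinearMap.adjoint A) (sphereInvConj x)
  | none, h => IsTypeInf.adjoint hu h
  | some α, h => by
    by_cases hα : α = 0
    · subst hα
      rw [sphereInvConj, if_pos rfl]
      exact IsTypeC.adjoint_of_eq_zero hu h
    · rw [sphereInvConj, if_neg hα]
      exact IsTypeC.adjoint_of_ne_zero hu hα h

lemma sphereInvConj_involutive : Function.Involutive sphereInvConj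
  | none => by simp [sphereInvConj]
  | some α => by by_cases hα : α = 0 <;> simp [sphereInvConj, hα]

end TTO

theorem TTO.type_adjoint_duality_general
    (u : Circ → ℂ) (hu : IsInner u)
    (A : Ku u →L[ℂ] Ku u) (x : Option ℂ) :
    IsTypeS u A x ↔ IsTypeS u (ContinuousLinearMap.adjoint A) (sphereInvConj x) := by
  refine ⟨IsTypeS.adjoint hu, fun h => ?_⟩
  simpa [sphereInvConj_involutive x] using IsTypeS.adjoint hu h

/-- An operator in `𝒯(u)` is of type `α ∈ ℂ*` (the Riemann sphere,
encoded as `Option ℂ` with `none = ∞`) if and only if its adjoint is of type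
`conj(α)⁻¹`, with the conventions `0⁻¹ = ∞`, `∞⁻¹ = 0` (and `conj ∞ = ∞`). -/
theorem TTO.type_adjoint_duality
    (u : Circ → ℂ) (hu : IsInner u) (hnc : Nonconst u)
    (A : Ku u →L[ℂ] Ku u) (hA : MemTTOs u A) (x : Option ℂ) :
    IsTypeS u A x ↔ IsTypeS u (ContinuousLinearMap.adjoint A) (sphereInvConj x) :=
  TTO.type_adjoint_duality_general u hu A x
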